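/- (Monotonicity of the ratio of comparison sine functions, used in the proof of Lemma 3.5) Let K ≤ κ ≤ 0. Then the function r ↦ sn_K(r)/sn_κ(r) is non-decreasing on (0,∞). Consequently, for every integer n ≥ 2 and all 0 < r ≤ d, ( sn_K(r)/sn_κ(r) )^{n−1} ≤ ( sn_K(d)/sn_κ(d) )^{n−1}. -/

import Mathlib

open Set

/-!
Sturm comparison. Both `sn_K` and `sn_κ` solve `f'' = -k f` with `f(0) = 0`, `f'(0) = 1`, and
`sn_k' = cs_k := cosh (√(-k) ·)` for every `k ≤ 0`. Their Wronskian
`W = cs_K sn_κ - sn_K cs_κ` vanishes at `0` and has derivative `(κ - K) sn_K sn_κ ≥ 0` on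
`[0, ∞)`, so `W ≥ 0` there; since `(sn_K / sn_κ)' = W / sn_κ²`, the ratio is non-decreasing.
-/

/-- The comparison sine function `sn_κ` for `κ ≤ 0`: `sn_0(t) = t` and
`sn_κ(t) = sinh(√(-κ) t)/√(-κ)` for `κ < 0`. -/
noncomputable def snk (κ : ℝ) (t : ℝ) : ℝ :=
  if κ = 0 then t else Real.sinh (Real.sqrt (-κ) * t) / Real.sqrt (-κ)

noncomputable def csk (κ : ℝ) (t : ℝ) : ℝ := Real.cosh (Real.sqrt (-κ) * t)

noncomputable def snkWronskian (K κ : ℝ) (t : ℝ) : ℝ := csk K t * snk κ t - snk K t * csk κ t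

lemma snk_zero_right (κ : ℝ) : snk κ 0 = 0 := by
  simp [snk]

lemma snk_pos {κ r : ℝ} (hκ : κ ≤ 0) (hr : 0 < r) : 0 < snk κ r := by
  unfold snk
  split_ifs with h
  · exact hr
  · have hs : 0 < Real.sqrt (-κ) := Real.sqrt_pos.mpr (by grind)
    exact div_pos (Real.sinh_pos_iff.mpr (by positivity)) hs

lemma hasDerivAt_snk {κ : ℝ} (hκ : κ ≤ 0) (t : ℝ) : HasDerivAt (snk κ) (csk κ t) t := by
  rcases hκ.lt_or_eq with hκ | rfl
  · have hs : Real.sqrt (-κ) ≠ 0 := (Real.sqrt_pos.mpr (neg_pos.mpr hκ)).ne'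
    rw [show snk κ = fun t => Real.sinh (Real.sqrt (-κ) * t) / Real.sqrt (-κ) from
      funext fun _ => if_neg hκ.ne]
    exact (((hasDerivAt_id' t).const_mul _).sinh.div_const _).congr_deriv (by field_simp; rfl)
  · rw [show snk 0 = id from funext fun _ => if_pos rfl]
    simpa [csk] using hasDerivAt_id t

lemma sqrt_neg_mul_sinh_eq (κ t : ℝ) :
    Real.sqrt (-κ) * Real.sinh (Real.sqrt (-κ) * t) = -κ * snk κ t := by
  unfold snk
  split_ifs with hκ
  · simp [hκ]
  rcases le_or_gt (-κ) 0 with hκ' | hκ'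
  · simp [Real.sqrt_eq_zero'.mpr hκ']
  · field_simp
    rw [Real.sq_sqrt hκ'.le, neg_mul]

lemma hasDerivAt_csk (κ t : ℝ) : HasDerivAt (csk κ) (-κ * snk κ t) t :=
  ((hasDerivAt_id' t).const_mul (Real.sqrt (-κ))).cosh.congr_deriv
    (by rw [mul_one, mul_comm, sqrt_neg_mul_sinh_eq])

lemma hasDerivAt_snkWronskian {K κ : ℝ} (hK : K ≤ 0) (hκ : κ ≤ 0) (t : ℝ) :
    HasDerivAt (snkWronskian K κ) ((κ - K) * snk K t * snk κ t) t :=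
  (((hasDerivAt_csk K t).mul (hasDerivAt_snk hκ t)).sub
    ((hasDerivAt_snk hK t).mul (hasDerivAt_csk κ t))).congr_deriv (by ring)

lemma snkWronskian_nonneg {K κ t : ℝ} (hK : K ≤ κ) (hκ : κ ≤ 0) (ht : 0 ≤ t) :
    0 ≤ snkWronskian K κ t := by
  have hK0 : K ≤ 0 := hK.trans hκ
  have hderiv := hasDerivAt_snkWronskian hK0 hκ
  have hmono : MonotoneOn (snkWronskian K κ) (Ici 0) := by
    refine monotoneOn_of_hasDerivWithinAt_nonneg (convex_Ici 0)
      (fun x _ => (hderiv x).continuousAt.continuousWithinAt)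
      (fun x _ => (hderiv x).hasDerivWithinAt) fun x hx => ?_
    rw [interior_Ici, mem_Ioi] at hx
    have := snk_pos hK0 hx
    have := snk_pos hκ hx
    have : 0 ≤ κ - K := sub_nonneg.mpr hK
    positivity
  have h0 : snkWronskian K κ 0 = 0 := by simp [snkWronskian, snk_zero_right]
  simpa [h0] using hmono self_mem_Ici ht ht

lemma monotoneOn_snk_div_snk {K κ : ℝ} (hK : K ≤ κ) (hκ : κ ≤ 0) :
    MonotoneOn (fun r => snk K r / snk κ r) (Ioi 0) := by
  have hderiv : ∀ r ∈ Ioi (0 : ℝ), HasDerivAt (fun r => snk K r / snk κ r)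
      (snkWronskian K κ r / snk κ r ^ 2) r := fun r hr =>
    (hasDerivAt_snk (hK.trans hκ) r).div (hasDerivAt_snk hκ r) (snk_pos hκ hr).ne'
  refine monotoneOn_of_hasDerivWithinAt_nonneg (convex_Ioi 0)
    (fun r hr => (hderiv r hr).continuousAt.continuousWithinAt)
    (fun r hr => (hderiv r (interior_subset hr)).hasDerivWithinAt) fun r hr => ?_
  rw [interior_Ioi, mem_Ioi] at hr
  exact div_nonneg (snkWronskian_nonneg hK hκ hr.le) (sq_nonneg _)

/-- Monotonicity of the ratio of comparison sine functions (used in Lemma 3.5): for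
`K ≤ κ ≤ 0`, the function `r ↦ sn_K(r)/sn_κ(r)` is non-decreasing on `(0,∞)`; consequently
`(sn_K(r)/sn_κ(r))^{n-1} ≤ (sn_K(d)/sn_κ(d))^{n-1}` whenever `0 < r ≤ d` and `n ≥ 2`. -/
theorem snk_ratio_monotone (K κ : ℝ) (hK : K ≤ κ) (hκ : κ ≤ 0) :
    MonotoneOn (fun r => snk K r / snk κ r) (Ioi 0) ∧
    ∀ n : ℕ, 2 ≤ n → ∀ r d : ℝ, 0 < r → r ≤ d →
      (snk K r / snk κ r) ^ (n - 1) ≤ (snk K d / snk κ d) ^ (n - 1) := by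
  have hmono := monotoneOn_snk_div_snk hK hκ
  refine ⟨hmono, fun n _ r d hr hrd => ?_⟩
  have hratio_nonneg : 0 ≤ snk K r / snk κ r :=
    div_nonneg (snk_pos (hK.trans hκ) hr).le (snk_pos hκ hr).le
  exact pow_le_pow_left₀ hratio_nonneg (hmono hr (hr.trans_le hrd) hrd) _
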